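/- arXiv:1410.4858 — 5 statements merged into one kernel-verified Lean document; each statement's English description precedes it below -/
import Mathlib

section
/- Let μ : [0,∞) × [0,∞) → ℝ be continuous, let V : [0,∞) × [0,∞) → [0,∞) be C¹, and suppose y : [0,∞) × [0,∞) → [0,∞) is a C¹ function satisfying y(t,λ) = λ + ∫₀ᵗ μ(u, y(u,λ)) du for all t, λ ≥ 0. Then the following are equivalent: (i) for every x ≥ 0 the function p_x(t,λ) = exp(−x·y(t,λ) − ∫₀ᵗ V(t−u, y(u,λ)) du) satisfies ∂p_x/∂t(t,λ) = μ(t,λ) ∂p_x/∂λ(t,λ) − V(t,λ) p_x(t,λ) with p_x(0,λ) = e^{−xλ}; (ii) for all t, λ ≥ 0 one has μ(t, y(t,λ)) = μ(t,λ) · ∂y/∂λ(t,λ) and V(t,λ) = ∇_{t,λ}( ∫₀ᵗ V(t−u, y(u,λ)) du ), where ∇_{t,λ} denotes the operator ∂/∂t − μ(t,λ) ∂/∂λ. -/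
/-!
Dividing by the factor `p_x > 0`, the equation for `p_x` at a point `(t, λ)` is affine in `x`,
with slope `μ ∂_λ y − ∂_t y` and constant term `V − ∇_{t,λ} I`, where
`I(t, λ) = ∫₀ᵗ V(t − u, y(u, λ)) du`. It holds for all `x ≥ 0` iff both vanish, and along the
characteristics `∂_t y(t, λ) = μ(t, y(t, λ))`. The analytic input is the differentiability of `I`,
which in `t` follows from rescaling the moving domain to `[0, 1]`.
-/

open Set intervalIntegral

section PartialDerivatives

variable {𝕜 E F G : Type*} [NontriviallyNormedField 𝕜]
  [NormedAddCommGroup E] [NormedSpace 𝕜 E] [NormedAddCommGroup F] [NormedSpace 𝕜 F]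
  [NormedAddCommGroup G] [NormedSpace 𝕜 G]

theorem DifferentiableAt.curry_left {f : E × F → G} {p : E × F}
    (hf : DifferentiableAt 𝕜 f p) : DifferentiableAt 𝕜 (fun x => f (x, p.2)) p.1 :=
  hf.comp p.1 (differentiableAt_id.prodMk (differentiableAt_const _))

theorem DifferentiableAt.curry_right {f : E × F → G} {p : E × F}
    (hf : DifferentiableAt 𝕜 f p) : DifferentiableAt 𝕜 (fun y => f (p.1, y)) p.2 :=
  hf.comp p.2 ((differentiableAt_const _).prodMk differentiableAt_id)

end PartialDerivatives

section ParametricIntegrals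

variable {H E : Type*} [NormedAddCommGroup H] [NormedSpace ℝ H] [ProperSpace H]
  [NormedAddCommGroup E] [NormedSpace ℝ E]

theorem ContDiff.differentiable_intervalIntegral {Φ : H × ℝ → E} (hΦ : ContDiff ℝ 1 Φ)
    (a b : ℝ) : Differentiable ℝ (fun x => ∫ u in a..b, Φ (x, u)) := by
  intro x₀
  have hcont (x : H) : Continuous (fun u => Φ (x, u)) := hΦ.continuous.comp (by fun_prop)
  set Φ' : H × ℝ → H →L[ℝ] E :=
    fun p => (fderiv ℝ Φ p).comp (ContinuousLinearMap.inl ℝ H ℝ)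
  have hΦ' : Continuous Φ' :=
    (hΦ.continuous_fderiv one_ne_zero).clm_comp continuous_const
  obtain ⟨C, hC⟩ : ∃ C, ∀ p ∈ Metric.closedBall x₀ 1 ×ˢ uIcc a b, ‖Φ' p‖ ≤ C :=
    ((isCompact_closedBall x₀ 1).prod isCompact_uIcc).exists_bound_of_continuousOn
      hΦ'.continuousOn
  refine (hasFDerivAt_integral_of_dominated_of_fderiv_le (F := fun x u => Φ (x, u))
    (F' := fun x u => Φ' (x, u)) (bound := fun _ => C) (Metric.closedBall_mem_nhds x₀ one_pos)
    (.of_forall fun x => (hcont x).aestronglyMeasurable) ((hcont x₀).intervalIntegrable a b)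
    (hΦ'.comp (by fun_prop)).aestronglyMeasurable ?_ intervalIntegrable_const
    ?_).differentiableAt
  · exact .of_forall fun u hu x hx => hC (x, u) ⟨hx, uIoc_subset_uIcc hu⟩
  · refine .of_forall fun u _ x _ => ?_
    exact ((hΦ.differentiable one_ne_zero) (x, u)).hasFDerivAt.comp x
      (hasFDerivAt_prodMk_left x u)

theorem ContDiff.differentiable_integral_zero_self {W : ℝ × ℝ → E} (hW : ContDiff ℝ 1 W) :
    Differentiable ℝ (fun s => ∫ u in (0:ℝ)..s, W (s, u)) := by
  have hrescale : (fun s => ∫ u in (0:ℝ)..s, W (s, u))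
      = fun s => s • ∫ r in (0:ℝ)..1, W (s, s * r) := by
    funext s
    rw [smul_integral_comp_mul_left (fun u => W (s, u)) s, mul_zero, mul_one]
  rw [hrescale]
  exact differentiable_id.smul
    ((hW.comp (by fun_prop : ContDiff ℝ 1 fun p : ℝ × ℝ => (p.1, p.1 * p.2))
      ).differentiable_intervalIntegral 0 1)

end ParametricIntegrals

theorem deriv_eq_of_eq_add_integral_on_Ici {f g : ℝ → ℝ} {a c t : ℝ}
    (hf : DifferentiableAt ℝ f t) (hg : Continuous g)
    (hfg : ∀ s, a ≤ s → f s = c + ∫ u in a..s, g u) (ht : a ≤ t) :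
    deriv f t = g t := by
  have hunique : UniqueDiffWithinAt ℝ (Ici a) t := uniqueDiffOn_Ici a t ht
  have hprim : HasDerivWithinAt (fun s => c + ∫ u in a..s, g u) (g t) (Ici a) t :=
    ((hg.integral_hasStrictDerivAt a t).hasDerivAt.const_add c).hasDerivWithinAt
  rw [← hf.derivWithin hunique]
  exact (hprim.congr hfg (hfg t ht)).derivWithin hunique

theorem forall_nonneg_mul_add_eq_zero_iff {a b : ℝ} :
    (∀ x : ℝ, 0 ≤ x → x * a + b = 0) ↔ a = 0 ∧ b = 0 := by
  constructor
  · intro h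
    have h0 := h 0 le_rfl
    have h1 := h 1 zero_le_one
    constructor <;> linarith
  · rintro ⟨rfl, rfl⟩ x _
    ring

theorem deriv_exp_family_eq_iff {Y J : ℝ → ℝ → ℝ} {x t l a v : ℝ}
    (hYt : DifferentiableAt ℝ (fun s => Y s l) t) (hYl : DifferentiableAt ℝ (fun m => Y t m) l)
    (hJt : DifferentiableAt ℝ (fun s => J s l) t) (hJl : DifferentiableAt ℝ (fun m => J t m) l) :
    deriv (fun s => Real.exp (-(x * Y s l) - J s l)) t
        = a * deriv (fun m => Real.exp (-(x * Y t m) - J t m)) l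
          - v * Real.exp (-(x * Y t l) - J t l)
      ↔ x * (a * deriv (fun m => Y t m) l - deriv (fun s => Y s l) t)
          + (v - (deriv (fun s => J s l) t - a * deriv (fun m => J t m) l)) = 0 := by
  have hexpt : HasDerivAt (fun s => -(x * Y s l) - J s l) _ t :=
    (hYt.hasDerivAt.const_mul x).neg.sub hJt.hasDerivAt
  have hexpl : HasDerivAt (fun m => -(x * Y t m) - J t m) _ l :=
    (hYl.hasDerivAt.const_mul x).neg.sub hJl.hasDerivAt
  have hcancel (A B : ℝ) : Real.exp (-(x * Y t l) - J t l) * A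
      = a * (Real.exp (-(x * Y t l) - J t l) * B) - v * Real.exp (-(x * Y t l) - J t l)
      ↔ A = a * B - v := by
    rw [show ∀ p : ℝ, a * (p * B) - v * p = p * (a * B - v) by intro; ring]
    exact mul_right_inj' (Real.exp_ne_zero _)
  rw [hexpt.exp.deriv, hexpl.exp.deriv, hcancel]
  constructor <;> intro h <;> linear_combination h

theorem stmt1_general (μ V y : ℝ → ℝ → ℝ)
    (hμ : Continuous (Function.uncurry μ))
    (hV : ContDiff ℝ 1 (Function.uncurry V))
    (hy : ContDiff ℝ 1 (Function.uncurry y))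
    (hychar : ∀ t l : ℝ, 0 ≤ t → 0 ≤ l →
      y t l = l + ∫ u in (0:ℝ)..t, μ u (y u l)) :
    ((∀ x ≥ (0:ℝ), ∀ t l : ℝ, 0 ≤ t → 0 ≤ l →
        (deriv (fun s => Real.exp (-(x * y s l) - ∫ u in (0:ℝ)..s, V (s - u) (y u l))) t
          = μ t l *
              deriv (fun m => Real.exp (-(x * y t m) - ∫ u in (0:ℝ)..t, V (t - u) (y u m))) l
            - V t l * Real.exp (-(x * y t l) - ∫ u in (0:ℝ)..t, V (t - u) (y u l)))
        ∧ Real.exp (-(x * y 0 l) - ∫ u in (0:ℝ)..(0:ℝ), V (0 - u) (y u l))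
            = Real.exp (-(x * l)))
    ↔ (∀ t l : ℝ, 0 ≤ t → 0 ≤ l →
        μ t (y t l) = μ t l * deriv (fun m => y t m) l
        ∧ V t l = deriv (fun s => ∫ u in (0:ℝ)..s, V (s - u) (y u l)) t
            - μ t l * deriv (fun m => ∫ u in (0:ℝ)..t, V (t - u) (y u m)) l)) := by
  have hy' := hy.differentiable one_ne_zero
  have hpde (x t l : ℝ) := deriv_exp_family_eq_iff (x := x) (a := μ t l) (v := V t l)
    (J := fun s l => ∫ u in (0:ℝ)..s, V (s - u) (y u l))
    (hy' (t, l)).curry_left (hy' (t, l)).curry_right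
    ((hV.comp (by fun_prop : ContDiff ℝ 1 fun p : ℝ × ℝ => (p.1 - p.2, y p.2 l))
      ).differentiable_integral_zero_self t)
    ((hV.comp (by fun_prop : ContDiff ℝ 1 fun p : ℝ × ℝ => (t - p.2, y p.2 p.1))
      ).differentiable_intervalIntegral 0 t l)
  have hchar {t l : ℝ} (ht : 0 ≤ t) (hl : 0 ≤ l) : deriv (fun s => y s l) t = μ t (y t l) :=
    deriv_eq_of_eq_add_integral_on_Ici (hy' (t, l)).curry_left (by fun_prop)
      (fun s hs => hychar s l hs hl) ht
  have hinit {l : ℝ} (hl : 0 ≤ l) : y 0 l = l := by simpa using hychar 0 l le_rfl hl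
  constructor
  · intro h t l ht hl
    obtain ⟨hμy, hVI⟩ := forall_nonneg_mul_add_eq_zero_iff.1
      fun x hx => (hpde x t l).1 (h x hx t l ht hl).1
    rw [hchar ht hl] at hμy
    constructor <;> linarith
  · intro h x _ t l ht hl
    obtain ⟨hμy, hVI⟩ := h t l ht hl
    refine ⟨(hpde x t l).2 ?_, by simp [hinit hl]⟩
    rw [hchar ht hl, hμy, ← hVI]
    ring

/-- Characterization (Proposition 2.4 of the paper): the family
`p_x(t,λ) = exp(−x y(t,λ) − ∫₀ᵗ V(t−u, y(u,λ)) du)` solves the Cauchy problem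
`∂p/∂t = μ ∂p/∂λ − V p`, `p(0,λ) = e^{−xλ}`, for every `x ≥ 0`, if and only if
`μ(t, y(t,λ)) = μ(t,λ) ∂y/∂λ(t,λ)` and
`V(t,λ) = ∇_{t,λ}(∫₀ᵗ V(t−u, y(u,λ)) du)` where `∇_{t,λ} = ∂/∂t − μ(t,λ) ∂/∂λ`. -/
theorem stmt1 (μ V y : ℝ → ℝ → ℝ)
    (hμ : Continuous (Function.uncurry μ))
    (hV : ContDiff ℝ 1 (Function.uncurry V))
    (hVnn : ∀ t l : ℝ, 0 ≤ t → 0 ≤ l → 0 ≤ V t l)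
    (hy : ContDiff ℝ 1 (Function.uncurry y))
    (hynn : ∀ t l : ℝ, 0 ≤ t → 0 ≤ l → 0 ≤ y t l)
    (hychar : ∀ t l : ℝ, 0 ≤ t → 0 ≤ l →
      y t l = l + ∫ u in (0:ℝ)..t, μ u (y u l)) :
    ((∀ x ≥ (0:ℝ), ∀ t l : ℝ, 0 ≤ t → 0 ≤ l →
        (deriv (fun s => Real.exp (-(x * y s l) - ∫ u in (0:ℝ)..s, V (s - u) (y u l))) t
          = μ t l *
              deriv (fun m => Real.exp (-(x * y t m) - ∫ u in (0:ℝ)..t, V (t - u) (y u m))) l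
            - V t l * Real.exp (-(x * y t l) - ∫ u in (0:ℝ)..t, V (t - u) (y u l)))
        ∧ Real.exp (-(x * y 0 l) - ∫ u in (0:ℝ)..(0:ℝ), V (0 - u) (y u l))
            = Real.exp (-(x * l)))
    ↔ (∀ t l : ℝ, 0 ≤ t → 0 ≤ l →
        μ t (y t l) = μ t l * deriv (fun m => y t m) l
        ∧ V t l = deriv (fun s => ∫ u in (0:ℝ)..s, V (s - u) (y u l)) t
            - μ t l * deriv (fun m => ∫ u in (0:ℝ)..t, V (t - u) (y u m)) l)) :=
  stmt1_general μ V y hμ hV hy hychar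
end

section
/- Let θ : [0,∞) → (−∞, 0] be a C¹ function. Set k(t) = exp(2∫₀ᵗ θ(u) du), y(t,λ) = λ k(t) / (1 + 2λ ∫₀ᵗ k(u) du), and μ(t,z) = −2z² + 2zθ(t). Then the intertwining condition μ(t, y(t,λ)) = μ(t,λ) · ∂y/∂λ(t,λ) holds for all t ≥ 0 and λ ≥ 0 if and only if θ is constant. -/
open Set intervalIntegral

/-!
Write `K(t) = ∫₀ᵗ k`. Since `∂y/∂λ = k/(1 + 2λK)²`, clearing denominators turns the
intertwining condition into `2λ²k (1 + 2θK − k) = 0`, i.e. into `k = 1 + 2θK` on `[0,∞)`.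
As `k' = 2θk` and `K' = k`, the function `F = k − 2θK` has `F' = −2θ'K` with `F(0) = 1`;
because `K > 0` on `(0,∞)`, `F ≡ 1` there exactly when `θ' ≡ 0`, i.e. when `θ` is constant.
-/

lemma eq_of_hasDerivAt_eq_zero_of_forall_gt {f f' : ℝ → ℝ} {a : ℝ}
    (hf : ContinuousOn f (Ici a)) (hd : ∀ x > a, HasDerivAt f (f' x) x)
    (h0 : ∀ x > a, f' x = 0) : ∀ t ≥ a, f t = f a := by
  intro t ht
  rcases ht.eq_or_lt with rfl | hat
  · rfl
  obtain ⟨c, hc, hslope⟩ := exists_hasDerivAt_eq_slope f f' hat (hf.mono Icc_subset_Ici_self)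
    fun x hx => hd x hx.1
  rw [h0 c hc.1, eq_comm, div_eq_zero_iff, sub_eq_zero, sub_eq_zero] at hslope
  exact hslope.resolve_right hat.ne'

lemma HasDerivAt.eq_zero_of_forall_gt_eq {f : ℝ → ℝ} {f' a c x : ℝ}
    (h : ∀ s > a, f s = c) (hx : a < x) (hd : HasDerivAt f f' x) : f' = 0 :=
  hd.unique <| (hasDerivAt_const x c).congr_of_eventuallyEq <|
    Filter.mem_of_superset (Ioi_mem_nhds hx) fun s hs => h s hs

lemma hasDerivAt_exp_two_mul_integral {θ : ℝ → ℝ} (hθ : Continuous θ) (t : ℝ) :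
    HasDerivAt (fun s => Real.exp (2 * ∫ u in (0:ℝ)..s, θ u))
      (2 * θ t * Real.exp (2 * ∫ u in (0:ℝ)..t, θ u)) t := by
  convert ((hθ.integral_hasStrictDerivAt 0 t).hasDerivAt.const_mul 2).exp using 1
  ring

lemma hasDerivAt_mul_div_one_add_two_mul (a b l : ℝ) (hl : 1 + 2 * l * b ≠ 0) :
    HasDerivAt (fun m => m * a / (1 + 2 * m * b)) (a / (1 + 2 * l * b) ^ 2) l := by
  have hnum : HasDerivAt (fun m : ℝ => m * a) a l := by
    simpa using (hasDerivAt_id l).mul_const a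
  have hden : HasDerivAt (fun m : ℝ => 1 + 2 * m * b) (2 * b) l := by
    simpa using (((hasDerivAt_id l).const_mul 2).mul_const b).const_add 1
  exact (hnum.div hden hl).congr_deriv (by ring)

/-- Pointwise in `t`, with `k = k(t)`, `K = ∫₀ᵗ k` and `θ = θ(t)`. -/
lemma intertwining_iff {θ k K : ℝ} (hk : 0 < k) (hK : 0 ≤ K) :
    (∀ l : ℝ, 0 ≤ l →
        -2 * (l * k / (1 + 2 * l * K)) ^ 2 + 2 * (l * k / (1 + 2 * l * K)) * θ
          = (-2 * l ^ 2 + 2 * l * θ) * deriv (fun m => m * k / (1 + 2 * m * K)) l)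
      ↔ k = 1 + 2 * θ * K := by
  have hD : ∀ l : ℝ, 0 ≤ l → 0 < 1 + 2 * l * K := fun l hl => by positivity
  have defect : ∀ l : ℝ, 0 ≤ l →
      (-2 * (l * k / (1 + 2 * l * K)) ^ 2 + 2 * (l * k / (1 + 2 * l * K)) * θ)
        - (-2 * l ^ 2 + 2 * l * θ) * deriv (fun m => m * k / (1 + 2 * m * K)) l
        = 2 * l ^ 2 * k * (1 + 2 * θ * K - k) / (1 + 2 * l * K) ^ 2 := by
    intro l hl
    rw [(hasDerivAt_mul_div_one_add_two_mul k K l (hD l hl).ne').deriv]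
    field_simp [(hD l hl).ne']
    ring
  constructor
  · intro h
    have h1 : 2 * 1 ^ 2 * k * (1 + 2 * θ * K - k) / (1 + 2 * 1 * K) ^ 2 = 0 := by
      rw [← defect 1 zero_le_one, sub_eq_zero.2 (h 1 zero_le_one)]
    simp only [div_eq_zero_iff, mul_eq_zero, pow_eq_zero_iff two_ne_zero, hk.ne',
      (hD 1 zero_le_one).ne'] at h1
    norm_num at h1
    linarith
  · intro h l hl
    rw [← sub_eq_zero, defect l hl, h, sub_self, mul_zero, zero_div]

lemma forall_eq_one_add_iff_const {θ k K : ℝ → ℝ} (hθ : Differentiable ℝ θ)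
    (hk : ∀ t, HasDerivAt k (2 * θ t * k t) t) (hK : ∀ t, HasDerivAt K (k t) t)
    (hk0 : k 0 = 1) (hK0 : K 0 = 0) (hKpos : ∀ t > (0:ℝ), 0 < K t) :
    (∀ t ≥ (0:ℝ), k t = 1 + 2 * θ t * K t) ↔ ∃ c : ℝ, ∀ t ≥ (0:ℝ), θ t = c := by
  set F : ℝ → ℝ := fun s => k s - 2 * θ s * K s
  have hF : ∀ t, HasDerivAt F (-(2 * deriv θ t * K t)) t := fun t =>
    ((hk t).sub (((hθ t).hasDerivAt.const_mul 2).mul (hK t))).congr_deriv (by ring)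
  have hFc : Continuous F := continuous_iff_continuousAt.2 fun t => (hF t).continuousAt
  constructor
  · intro h
    have hθ' : ∀ x > (0:ℝ), deriv θ x = 0 := fun x hx => by
      have := (hF x).eq_zero_of_forall_gt_eq (c := 1) (fun s hs => by simp [F, h s hs.le]) hx
      simpa [(hKpos x hx).ne'] using this
    exact ⟨θ 0, eq_of_hasDerivAt_eq_zero_of_forall_gt hθ.continuous.continuousOn
      (fun x _ => (hθ x).hasDerivAt) hθ'⟩
  · rintro ⟨c, hc⟩ t ht
    have hF' : ∀ x > (0:ℝ), -(2 * deriv θ x * K x) = 0 := fun x hx => by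
      rw [(hθ x).hasDerivAt.eq_zero_of_forall_gt_eq (fun s hs => hc s hs.le) hx]
      ring
    have := eq_of_hasDerivAt_eq_zero_of_forall_gt hFc.continuousOn (fun x _ => hF x) hF' t ht
    simp only [F, hk0, hK0] at this
    linarith

theorem stmt4_general (θ : ℝ → ℝ) (hθ : ContDiff ℝ 1 θ)
    (k : ℝ → ℝ) (hk : ∀ t, k t = Real.exp (2 * ∫ u in (0:ℝ)..t, θ u))
    (y : ℝ → ℝ → ℝ)
    (hy : ∀ t l, y t l = l * k t / (1 + 2 * l * ∫ u in (0:ℝ)..t, k u))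
    (μ : ℝ → ℝ → ℝ) (hμ : ∀ t z, μ t z = -2 * z ^ 2 + 2 * z * θ t) :
    (∀ t l : ℝ, 0 ≤ t → 0 ≤ l →
        μ t (y t l) = μ t l * deriv (fun m => y t m) l)
      ↔ ∃ c : ℝ, ∀ t ≥ (0:ℝ), θ t = c := by
  have hkpos : ∀ t, 0 < k t := fun t => hk t ▸ Real.exp_pos _
  have hkd : ∀ t, HasDerivAt k (2 * θ t * k t) t := by
    obtain rfl : k = _ := funext hk
    exact hasDerivAt_exp_two_mul_integral hθ.continuous
  have hkc : Continuous k := continuous_iff_continuousAt.2 fun t => (hkd t).continuousAt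
  have hK : ∀ t ≥ (0:ℝ), 0 ≤ ∫ u in (0:ℝ)..t, k u := fun t ht =>
    integral_nonneg ht fun u _ => (hkpos u).le
  calc _ ↔ ∀ t ≥ (0:ℝ), k t = 1 + 2 * θ t * ∫ u in (0:ℝ)..t, k u := by
        simp only [hμ, hy]
        exact forall_congr' fun t =>
          ⟨fun h ht => (intertwining_iff (hkpos t) (hK t ht)).1 fun l hl => h l ht hl,
            fun h l ht hl => (intertwining_iff (hkpos t) (hK t ht)).2 (h ht) l hl⟩
    _ ↔ _ := forall_eq_one_add_iff_const (hθ.differentiable one_ne_zero) hkd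
        (fun t => (hkc.integral_hasStrictDerivAt 0 t).hasDerivAt) (by simp [hk]) (by simp)
        fun t ht => intervalIntegral_pos_of_pos (hkc.intervalIntegrable _ _) hkpos ht

/-- For `μ(t,z) = −2z² + 2zθ(t)` and the characteristic field
`y(t,λ) = λk(t)/(1 + 2λ∫₀ᵗ k)`, with `k(t) = exp(2∫₀ᵗ θ)`, the intertwining
condition `μ(t, y(t,λ)) = μ(t,λ) ∂y/∂λ(t,λ)` holds on `[0,∞)²` iff `θ` is
constant. -/
theorem stmt4 (θ : ℝ → ℝ) (hθ : ContDiff ℝ 1 θ) (hθnp : ∀ t ≥ (0:ℝ), θ t ≤ 0)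
    (k : ℝ → ℝ) (hk : ∀ t, k t = Real.exp (2 * ∫ u in (0:ℝ)..t, θ u))
    (y : ℝ → ℝ → ℝ)
    (hy : ∀ t l, y t l = l * k t / (1 + 2 * l * ∫ u in (0:ℝ)..t, k u))
    (μ : ℝ → ℝ → ℝ) (hμ : ∀ t z, μ t z = -2 * z ^ 2 + 2 * z * θ t) :
    (∀ t l : ℝ, 0 ≤ t → 0 ≤ l →
        μ t (y t l) = μ t l * deriv (fun m => y t m) l)
      ↔ ∃ c : ℝ, ∀ t ≥ (0:ℝ), θ t = c :=
  stmt4_general θ hθ k hk y hy μ hμ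
end

section
/- Fix δ ≥ 0 and x ≥ 0. Define p(t,λ) = (1 + 2λt(1−t))^{−δ/2} · exp( −x λ (1−t)² / (1 + 2λt(1−t)) ) for t ∈ [0,1) and λ ≥ 0. Then p(0,λ) = e^{−xλ} and p solves ∂p/∂t(t,λ) = −2λ(λ + 1/(1−t)) ∂p/∂λ(t,λ) − δλ p(t,λ) for all t ∈ [0,1) and λ ≥ 0. -/
open Real

/-!
Both partial derivatives of `p = A ^ r * exp (-(N / A))` are `p` times the logarithmic derivative
`r A' / A - (N' A - N A') / A ^ 2`. With `A = 1 + 2λt(1-t)` and `N = xλ(1-t)²` the equation,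
divided by `p`, becomes an identity between rational functions of `t` and `λ`.
-/

theorem HasDerivAt.rpow_mul_exp_neg_div {A N : ℝ → ℝ} {a n s : ℝ} (r : ℝ)
    (hA : HasDerivAt A a s) (hN : HasDerivAt N n s) (hpos : 0 < A s) :
    HasDerivAt (fun u => A u ^ r * Real.exp (-(N u / A u)))
      (A s ^ r * Real.exp (-(N s / A s)) * (r * a / A s - (n * A s - N s * a) / A s ^ 2)) s := by
  refine ((hA.rpow_const (Or.inl hpos.ne')).mul
    (hN.div hA hpos.ne').neg.exp).congr_deriv ?_
  rw [rpow_sub_one hpos.ne', Pi.neg_apply, Pi.div_apply]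
  field_simp
  ring

theorem stmt8_general (δ x : ℝ)
    (p : ℝ → ℝ → ℝ)
    (hp : ∀ t l : ℝ, p t l
      = (1 + 2 * l * t * (1 - t)) ^ (-(δ / 2))
          * Real.exp (-(x * l * (1 - t) ^ 2 / (1 + 2 * l * t * (1 - t))))) :
    (∀ l ≥ (0:ℝ), p 0 l = Real.exp (-(x * l)))
    ∧ ∀ t l : ℝ, 0 ≤ t → t < 1 → 0 ≤ l →
        deriv (fun s => p s l) t
          = -2 * l * (l + 1 / (1 - t)) * deriv (fun m => p t m) l
            - δ * l * p t l := by
  refine ⟨fun l _ => by simp [hp], fun t l ht ht1 hl => ?_⟩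
  have h1t : 0 < 1 - t := sub_pos.2 ht1
  have hA : 0 < 1 + 2 * l * t * (1 - t) := by positivity
  have hAt : HasDerivAt (fun s => 1 + 2 * l * s * (1 - s)) (2 * l * (1 - 2 * t)) t :=
    ((((hasDerivAt_id' t).const_mul (2 * l)).mul
      ((hasDerivAt_id' t).const_sub 1)).const_add 1).congr_deriv (by ring)
  have hNt : HasDerivAt (fun s => x * l * (1 - s) ^ 2) (-(2 * x * l * (1 - t))) t :=
    ((((hasDerivAt_id' t).const_sub 1).pow 2).const_mul (x * l)).congr_deriv (by ring)
  have hAl : HasDerivAt (fun m => 1 + 2 * m * t * (1 - t)) (2 * t * (1 - t)) l := by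
    simpa using ((((hasDerivAt_id l).const_mul 2).mul_const t).mul_const (1 - t)).const_add 1
  have hNl : HasDerivAt (fun m => x * m * (1 - t) ^ 2) (x * (1 - t) ^ 2) l := by
    simpa using ((hasDerivAt_id l).const_mul x).mul_const ((1 - t) ^ 2)
  simp only [hp]
  rw [(hAt.rpow_mul_exp_neg_div _ hNt hA).deriv, (hAl.rpow_mul_exp_neg_div _ hNl hA).deriv]
  field_simp
  ring

/-- The closed form of the Laplace transform of the δ-dimensional squared Bessel
bridge started at x has initial value `e^{−xλ}` and solves
`∂p/∂t = −2λ(λ + 1/(1−t)) ∂p/∂λ − δλ p` on `[0,1) × [0,∞)`. -/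
theorem stmt8 (δ x : ℝ) (hδ : 0 ≤ δ) (hx : 0 ≤ x)
    (p : ℝ → ℝ → ℝ)
    (hp : ∀ t l : ℝ, p t l
      = (1 + 2 * l * t * (1 - t)) ^ (-(δ / 2))
          * Real.exp (-(x * l * (1 - t) ^ 2 / (1 + 2 * l * t * (1 - t))))) :
    (∀ l ≥ (0:ℝ), p 0 l = Real.exp (-(x * l)))
    ∧ ∀ t l : ℝ, 0 ≤ t → t < 1 → 0 ≤ l →
        deriv (fun s => p s l) t
          = -2 * l * (l + 1 / (1 - t)) * deriv (fun m => p t m) l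
            - δ * l * p t l :=
  stmt8_general δ x p hp
end

section
/- Let α > 0 and x₀ ∈ ℝ, and let I ⊆ [0,∞) be an interval containing 0 on which D(t) := 2α + (x₀ − α)(1 − e^{4αt}) does not vanish. Then the function y(t) = α ( 1 + 2(x₀ − α) e^{4αt} / D(t) ) is differentiable on I, satisfies y(0) = x₀, and solves the Riccati equation y'(t) = 2 y(t)² − 2α² on I. -/
open Set

section Riccati

variable (α x₀ : ℝ)

noncomputable def riccatiDenom (t : ℝ) : ℝ :=
  2 * α + (x₀ - α) * (1 - Real.exp (4 * α * t))

noncomputable def riccatiSol (t : ℝ) : ℝ :=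
  α * (1 + 2 * (x₀ - α) * Real.exp (4 * α * t) / riccatiDenom α x₀ t)

variable {α x₀}

lemma riccatiDenom_zero : riccatiDenom α x₀ 0 = 2 * α := by
  simp [riccatiDenom]

lemma riccatiSol_zero (hα : α ≠ 0) : riccatiSol α x₀ 0 = x₀ := by
  rw [riccatiSol, riccatiDenom_zero, mul_zero, Real.exp_zero]
  field_simp
  ring

lemma hasDerivAt_exp_const_mul (k t : ℝ) :
    HasDerivAt (fun s => Real.exp (k * s)) (Real.exp (k * t) * k) t := by
  simpa using ((hasDerivAt_id t).const_mul k).exp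

lemma hasDerivAt_riccatiDenom (t : ℝ) :
    HasDerivAt (riccatiDenom α x₀) (-(4 * α * (x₀ - α) * Real.exp (4 * α * t))) t :=
  ((((hasDerivAt_const t 1).sub (hasDerivAt_exp_const_mul _ t)).const_mul _).const_add _).congr_deriv
    (by ring)

/-- With `c = x₀ - α`, `e = exp (4αt)` and `D` the denominator, both sides equal
`8α²ce(D + ce)/D²`. -/
lemma hasDerivAt_riccatiSol {t : ℝ} (hD : riccatiDenom α x₀ t ≠ 0) :
    HasDerivAt (riccatiSol α x₀) (2 * riccatiSol α x₀ t ^ 2 - 2 * α ^ 2) t := by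
  have hquot := ((hasDerivAt_exp_const_mul (4 * α) t).const_mul (2 * (x₀ - α))).div
    (hasDerivAt_riccatiDenom t) hD
  refine ((hquot.const_add 1).const_mul α).congr_deriv ?_
  rw [riccatiSol]
  field_simp
  rw [riccatiDenom]
  ring

end Riccati

theorem stmt12_general (α x₀ : ℝ)
    (I : Set ℝ) (hI0 : (0:ℝ) ∈ I)
    (D : ℝ → ℝ)
    (hD : ∀ t, D t = 2 * α + (x₀ - α) * (1 - Real.exp (4 * α * t)))
    (hDne : ∀ t ∈ I, D t ≠ 0)
    (y : ℝ → ℝ)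
    (hy : ∀ t, y t = α * (1 + 2 * (x₀ - α) * Real.exp (4 * α * t) / D t)) :
    y 0 = x₀ ∧ ∀ t ∈ I, HasDerivWithinAt y (2 * (y t) ^ 2 - 2 * α ^ 2) I t := by
  obtain rfl : D = riccatiDenom α x₀ := funext hD
  obtain rfl : y = riccatiSol α x₀ := funext hy
  have hα : α ≠ 0 := by
    simpa [riccatiDenom_zero] using hDne 0 hI0
  exact ⟨riccatiSol_zero hα, fun t ht => (hasDerivAt_riccatiSol (hDne t ht)).hasDerivWithinAt⟩

/-- Explicit solution of the special Riccati problem `y' = 2y² − 2α²`,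
`y(0) = x₀`. -/
theorem stmt12 (α x₀ : ℝ) (hα : 0 < α)
    (I : Set ℝ) (hI : I ⊆ Ici 0) (hI0 : (0:ℝ) ∈ I) (hIconn : I.OrdConnected)
    (D : ℝ → ℝ)
    (hD : ∀ t, D t = 2 * α + (x₀ - α) * (1 - Real.exp (4 * α * t)))
    (hDne : ∀ t ∈ I, D t ≠ 0)
    (y : ℝ → ℝ)
    (hy : ∀ t, y t = α * (1 + 2 * (x₀ - α) * Real.exp (4 * α * t) / D t)) :
    y 0 = x₀ ∧ ∀ t ∈ I, HasDerivWithinAt y (2 * (y t) ^ 2 - 2 * α ^ 2) I t :=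
  stmt12_general α x₀ I hI0 D hD hDne y hy
end

section
/- Let α ≥ 0, γ > 0, δ ≥ 0, x ≥ 0, and set a = (√(α² + 2γ) − α)/2. Define φ(t,λ) = a + (λ − a)(2a + α) / ( e^{2t(α+2a)} (a + α + λ) + a − λ ) and ψ(t,λ) = δ a t − (δ/2) · log( 1 + (λ − a)(1 − e^{2t(α+2a)}) / ( e^{2t(α+2a)} (a + α + λ) + a − λ ) ). Then for all t ≥ 0, λ ≥ 0 the denominator e^{2t(α+2a)}(a+α+λ) + a − λ is strictly positive and the argument of the logarithm is strictly positive, and the function p(t,λ) = exp(−x φ(t,λ) − ψ(t,λ)) satisfies p(0,λ) = e^{−xλ} and solves ∂p/∂t(t,λ) = (γ − 2λ² − 2αλ) ∂p/∂λ(t,λ) − δ λ p(t,λ) on [0,∞) × [0,∞). -/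
/-!
Write `c(λ) = γ - 2λ² - 2αλ`. Since `γ = 2a² + 2aα`, it factors as
`c(λ) = -2(λ - a)(λ + a + α)`, so `a` is a root of the Riccati drift. With
`κ = 2a + α = √(α² + 2γ) > 0` and `a + α ≥ 0`, the denominator
`D = e^{2κt}(a + α + λ) + a - λ` is at least `κ` for `t, λ ≥ 0`, and the argument of the
logarithm simplifies to `κ e^{2κt} / D`. The function `p = exp(-xφ - ψ)` solves the PDE as soon
as `φ` and `ψ` solve the transport equations `φ_t = c φ_λ` and `ψ_t = c ψ_λ + δλ` (method of
characteristics), and both are rational identities in `e^{2κt}` once the derivatives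
`φ_λ = κ² e^{2κt} / D²` and `ψ_λ = δ (e^{2κt} - 1) / (2D)` are computed.
-/

namespace SquaredOU

noncomputable def denom (α a t l : ℝ) : ℝ :=
  Real.exp (2 * t * (α + 2 * a)) * (a + α + l) + a - l

noncomputable def phi (α a t l : ℝ) : ℝ :=
  a + (l - a) * (2 * a + α) / denom α a t l

noncomputable def logArg (α a t l : ℝ) : ℝ :=
  1 + (l - a) * (1 - Real.exp (2 * t * (α + 2 * a))) / denom α a t l

noncomputable def psi (δ α a t l : ℝ) : ℝ :=
  δ * a * t - δ / 2 * Real.log (logArg α a t l)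

variable {α a : ℝ}

theorem denom_pos (hκ : 0 < 2 * a + α) (haα : 0 ≤ a + α) {t l : ℝ} (ht : 0 ≤ t)
    (hl : 0 ≤ l) : 0 < denom α a t l := by
  have hE : 1 ≤ Real.exp (2 * t * (α + 2 * a)) := Real.one_le_exp (by nlinarith)
  have hgrowth := mul_nonneg (sub_nonneg.2 hE) (by linarith : 0 ≤ a + α + l)
  calc 0 < 2 * a + α + (Real.exp (2 * t * (α + 2 * a)) - 1) * (a + α + l) := by linarith
    _ = denom α a t l := by rw [denom]; ring

theorem logArg_eq {t l : ℝ} (hD : denom α a t l ≠ 0) :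
    logArg α a t l = Real.exp (2 * t * (α + 2 * a)) * (2 * a + α) / denom α a t l := by
  rw [logArg, eq_div_iff hD, add_mul, div_mul_cancel₀ _ hD, denom]
  ring

theorem logArg_pos (hκ : 0 < 2 * a + α) (haα : 0 ≤ a + α) {t l : ℝ} (ht : 0 ≤ t)
    (hl : 0 ≤ l) : 0 < logArg α a t l := by
  have hD := denom_pos hκ haα ht hl
  rw [logArg_eq hD.ne']
  have := Real.exp_pos (2 * t * (α + 2 * a))
  positivity

theorem logArg_ne_zero (hκ : 2 * a + α ≠ 0) {t l : ℝ} (hD : denom α a t l ≠ 0) :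
    logArg α a t l ≠ 0 := by
  rw [logArg_eq hD]
  have := Real.exp_ne_zero (2 * t * (α + 2 * a))
  positivity

theorem phi_zero (hκ : 2 * a + α ≠ 0) (l : ℝ) : phi α a 0 l = l := by
  rw [phi, denom, mul_zero, zero_mul, Real.exp_zero, one_mul,
    show a + α + l + a - l = 2 * a + α by ring, mul_div_cancel_right₀ _ hκ]
  ring

theorem psi_zero (δ l : ℝ) : psi δ α a 0 l = 0 := by
  simp [psi, logArg]

theorem hasDerivAt_exp_time (t : ℝ) :
    HasDerivAt (fun s => Real.exp (2 * s * (α + 2 * a)))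
      (2 * (2 * a + α) * Real.exp (2 * t * (α + 2 * a))) t := by
  have h : HasDerivAt (fun s : ℝ => 2 * s * (α + 2 * a)) (2 * (2 * a + α)) t := by
    simpa [add_comm] using ((hasDerivAt_id t).const_mul 2).mul_const (α + 2 * a)
  exact h.exp.congr_deriv (mul_comm _ _)

theorem hasDerivAt_denom_time (t l : ℝ) :
    HasDerivAt (fun s => denom α a s l)
      (2 * (2 * a + α) * Real.exp (2 * t * (α + 2 * a)) * (a + α + l)) t :=
  ((hasDerivAt_exp_time t).mul_const (a + α + l)).add_const a |>.sub_const l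

theorem hasDerivAt_denom_space (t l : ℝ) :
    HasDerivAt (fun m => denom α a t m) (Real.exp (2 * t * (α + 2 * a)) - 1) l :=
  (((((hasDerivAt_id l).const_add (a + α)).const_mul
    (Real.exp (2 * t * (α + 2 * a)))).add_const a).sub (hasDerivAt_id l)).congr_deriv (by ring)

theorem hasDerivAt_phi_space {t l : ℝ} (hD : denom α a t l ≠ 0) :
    HasDerivAt (fun m => phi α a t m)
      ((2 * a + α) ^ 2 * Real.exp (2 * t * (α + 2 * a)) / denom α a t l ^ 2) l := by
  have hnum : HasDerivAt (fun m : ℝ => (m - a) * (2 * a + α)) (2 * a + α) l := by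
    simpa using ((hasDerivAt_id l).sub_const a).mul_const (2 * a + α)
  refine ((hnum.div (hasDerivAt_denom_space t l) hD).const_add a).congr_deriv ?_
  rw [denom] at hD ⊢
  field_simp
  ring

theorem hasDerivAt_phi_time {t l : ℝ} (hD : denom α a t l ≠ 0) :
    HasDerivAt (fun s => phi α a s l)
      ((2 * a ^ 2 + 2 * a * α - 2 * l ^ 2 - 2 * α * l) *
        ((2 * a + α) ^ 2 * Real.exp (2 * t * (α + 2 * a)) / denom α a t l ^ 2)) t := by
  refine (((hasDerivAt_const t ((l - a) * (2 * a + α))).div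
    (hasDerivAt_denom_time t l) hD).const_add a).congr_deriv ?_
  field_simp
  ring

theorem hasDerivAt_psi_space (δ : ℝ) {t l : ℝ} (hκ : 2 * a + α ≠ 0)
    (hD : denom α a t l ≠ 0) :
    HasDerivAt (fun m => psi δ α a t m)
      (δ / 2 * (Real.exp (2 * t * (α + 2 * a)) - 1) / denom α a t l) l := by
  have hnum : HasDerivAt (fun m : ℝ => (m - a) * (1 - Real.exp (2 * t * (α + 2 * a))))
      (1 - Real.exp (2 * t * (α + 2 * a))) l := by
    simpa using ((hasDerivAt_id l).sub_const a).mul_const (1 - Real.exp (2 * t * (α + 2 * a)))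
  have hlog := (((hnum.div (hasDerivAt_denom_space t l) hD).const_add 1).log
    (logArg_ne_zero hκ hD)).const_mul (δ / 2)
  refine ((hasDerivAt_const l (δ * a * t)).sub hlog).congr_deriv ?_
  change _ - δ / 2 * (_ / _ / logArg α a t l) = _
  rw [logArg_eq hD]
  rw [denom] at hD ⊢
  field_simp
  ring

theorem hasDerivAt_psi_time (δ : ℝ) {t l : ℝ} (hκ : 2 * a + α ≠ 0)
    (hD : denom α a t l ≠ 0) :
    HasDerivAt (fun s => psi δ α a s l)
      ((2 * a ^ 2 + 2 * a * α - 2 * l ^ 2 - 2 * α * l) *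
        (δ / 2 * (Real.exp (2 * t * (α + 2 * a)) - 1) / denom α a t l) + δ * l) t := by
  have hlin : HasDerivAt (fun s : ℝ => δ * a * s) (δ * a) t := by
    simpa using (hasDerivAt_id t).const_mul (δ * a)
  have hlog := ((((((hasDerivAt_exp_time t).const_sub 1).const_mul (l - a)).div
    (hasDerivAt_denom_time t l) hD).const_add 1).log (logArg_ne_zero hκ hD)).const_mul (δ / 2)
  refine (hlin.sub hlog).congr_deriv ?_
  change _ - δ / 2 * (_ / _ / logArg α a t l) = _
  rw [logArg_eq hD]
  rw [denom] at hD ⊢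
  have hE := Real.exp_ne_zero (2 * t * (α + 2 * a))
  have hκ' : a * 2 + α ≠ 0 := by rwa [mul_comm]
  generalize Real.exp (2 * t * (α + 2 * a)) = E at hD hE ⊢
  field_simp
  ring

end SquaredOU

theorem deriv_exp_of_transport {f g : ℝ → ℝ → ℝ} {x c δ t l f' g' : ℝ}
    (hft : HasDerivAt (f · l) (c * f') t) (hfl : HasDerivAt (f t ·) f' l)
    (hgt : HasDerivAt (g · l) (c * g' + δ * l) t) (hgl : HasDerivAt (g t ·) g' l) :
    deriv (fun s => Real.exp (-(x * f s l) - g s l)) t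
      = c * deriv (fun m => Real.exp (-(x * f t m) - g t m)) l
        - δ * l * Real.exp (-(x * f t l) - g t l) := by
  have hpt : HasDerivAt (fun s => Real.exp (-(x * f s l) - g s l))
      (Real.exp (-(x * f t l) - g t l) * (-(x * (c * f')) - (c * g' + δ * l))) t :=
    ((hft.const_mul x).neg.sub hgt).exp
  have hpl : HasDerivAt (fun m => Real.exp (-(x * f t m) - g t m))
      (Real.exp (-(x * f t l) - g t l) * (-(x * f') - g')) l :=
    ((hfl.const_mul x).neg.sub hgl).exp
  rw [hpt.deriv, hpl.deriv]
  ring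

theorem stmt13_general (α γ δ x : ℝ) (hγ : 0 < γ)
    (a : ℝ) (ha : a = (Real.sqrt (α ^ 2 + 2 * γ) - α) / 2)
    (φ ψ p : ℝ → ℝ → ℝ)
    (hφ : ∀ t l : ℝ, φ t l
      = a + (l - a) * (2 * a + α)
          / (Real.exp (2 * t * (α + 2 * a)) * (a + α + l) + a - l))
    (hψ : ∀ t l : ℝ, ψ t l
      = δ * a * t - δ / 2 *
          Real.log (1 + (l - a) * (1 - Real.exp (2 * t * (α + 2 * a)))
            / (Real.exp (2 * t * (α + 2 * a)) * (a + α + l) + a - l)))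
    (hp : ∀ t l : ℝ, p t l = Real.exp (-(x * φ t l) - ψ t l)) :
    (∀ t l : ℝ, 0 ≤ t → 0 ≤ l →
        0 < Real.exp (2 * t * (α + 2 * a)) * (a + α + l) + a - l
        ∧ 0 < 1 + (l - a) * (1 - Real.exp (2 * t * (α + 2 * a)))
            / (Real.exp (2 * t * (α + 2 * a)) * (a + α + l) + a - l))
    ∧ (∀ l ≥ (0:ℝ), p 0 l = Real.exp (-(x * l)))
    ∧ ∀ t l : ℝ, 0 ≤ t → 0 ≤ l →
        deriv (fun s => p s l) t
          = (γ - 2 * l ^ 2 - 2 * α * l) * deriv (fun m => p t m) l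
            - δ * l * p t l := by
  open SquaredOU in
  have hs : |α| < √(α ^ 2 + 2 * γ) :=
    (Real.lt_sqrt (abs_nonneg α)).2 (by rw [sq_abs]; linarith)
  have hκ : 0 < 2 * a + α := by rw [ha]; linarith [abs_nonneg α]
  have haα : 0 ≤ a + α := by rw [ha]; linarith [neg_abs_le α]
  have hγa : γ = 2 * a ^ 2 + 2 * a * α := by
    rw [ha]; nlinarith [Real.sq_sqrt (by positivity : (0:ℝ) ≤ α ^ 2 + 2 * γ)]
  obtain rfl : φ = phi α a := funext₂ hφ
  obtain rfl : ψ = psi δ α a := funext₂ hψ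
  obtain rfl : p = fun t l => Real.exp (-(x * phi α a t l) - psi δ α a t l) := funext₂ hp
  refine ⟨fun t l ht hl => ⟨denom_pos hκ haα ht hl, logArg_pos hκ haα ht hl⟩,
    fun l _ => ?_, fun t l ht hl => ?_⟩
  · simp only [phi_zero hκ.ne', psi_zero, sub_zero]
  · have hD := (denom_pos hκ haα ht hl).ne'
    rw [hγa]
    exact deriv_exp_of_transport (hasDerivAt_phi_time hD) (hasDerivAt_phi_space hD)
      (hasDerivAt_psi_time δ hκ.ne' hD) (hasDerivAt_psi_space δ hκ.ne' hD)

/-- The joint Laplace transform of a squared radial Ornstein–Uhlenbeck process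
and its time integral: positivity of the denominators and of the argument of
the logarithm, the initial condition `p(0,λ) = e^{−xλ}`, and the PDE
`∂p/∂t = (γ − 2λ² − 2αλ) ∂p/∂λ − δλ p`. Here `a = (√(α²+2γ) − α)/2`. -/
theorem stmt13 (α γ δ x : ℝ) (hα : 0 ≤ α) (hγ : 0 < γ) (hδ : 0 ≤ δ)
    (hx : 0 ≤ x)
    (a : ℝ) (ha : a = (Real.sqrt (α ^ 2 + 2 * γ) - α) / 2)
    (φ ψ p : ℝ → ℝ → ℝ)
    (hφ : ∀ t l : ℝ, φ t l
      = a + (l - a) * (2 * a + α)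
          / (Real.exp (2 * t * (α + 2 * a)) * (a + α + l) + a - l))
    (hψ : ∀ t l : ℝ, ψ t l
      = δ * a * t - δ / 2 *
          Real.log (1 + (l - a) * (1 - Real.exp (2 * t * (α + 2 * a)))
            / (Real.exp (2 * t * (α + 2 * a)) * (a + α + l) + a - l)))
    (hp : ∀ t l : ℝ, p t l = Real.exp (-(x * φ t l) - ψ t l)) :
    (∀ t l : ℝ, 0 ≤ t → 0 ≤ l →
        0 < Real.exp (2 * t * (α + 2 * a)) * (a + α + l) + a - l
        ∧ 0 < 1 + (l - a) * (1 - Real.exp (2 * t * (α + 2 * a)))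
            / (Real.exp (2 * t * (α + 2 * a)) * (a + α + l) + a - l))
    ∧ (∀ l ≥ (0:ℝ), p 0 l = Real.exp (-(x * l)))
    ∧ ∀ t l : ℝ, 0 ≤ t → 0 ≤ l →
        deriv (fun s => p s l) t
          = (γ - 2 * l ^ 2 - 2 * α * l) * deriv (fun m => p t m) l
            - δ * l * p t l :=
  stmt13_general α γ δ x hγ a ha φ ψ p hφ hψ hp
end
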